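/- arXiv:1103.5435 — 5 statements merged into one kernel-verified Lean document; each statement's English description precedes it below -/
import Mathlib

section
/- Under the hypotheses of the sequential update scheme (F : ℝ^K → ℝ is C² with |∂²F/∂xᵢ∂xⱼ| ≤ β; updates cycle through a fixed list (ẽ₁, …, ẽ_K̃) of standard basis vectors containing every eᵢ; x^{n+1} − x^n is a multiple of ẽ_{n+1} with ‖x^{n+1} − x^n‖ ≤ γ·|∂ₙF(x^n)|, where ∂ₙF is the partial derivative in direction ẽ_{n+1}), for every n one has ‖dF(x^n)‖₁ ≤ σ · Σ_{j=0}^{K̃−1} |∂_{n+j}F(x^{n+j})|, where σ = 1 + (K−1)·β·γ and ‖dF(x^n)‖₁ = Σ_{i=1}^K |∂F/∂xᵢ(x^n)| is the ℓ¹ norm of the gradient. -/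
/-!
Moving only coordinate `e m` at step `m` changes every partial derivative by at most
`β ‖x (m + 1) - x m‖ ≤ β γ |∂_{e m} F (x m)|` (mean value theorem along the step). Within the
window `n, …, n + K̃ - 1` every coordinate `i` is updated, first at step `n + kᵢ`, so
`|∂ᵢ F (xⁿ)|` is at most the active partial `|∂_{n+kᵢ} F (x^{n+kᵢ})|` plus the drift
`β γ ∑_{m < kᵢ} |∂_{n+m} F (x^{n+m})|`. The indices `kᵢ` are distinct, so the active terms
add up to at most the window sum `S = ∑_{j < K̃} |∂_{n+j} F (x^{n+j})|`; each of the `K - 1`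
coordinates other than `e n` drifts by at most `β γ S`, and `e n` does not drift at all since
`k_{e n} = 0`.
-/

open Finset

theorem Function.Periodic.exists_lt_apply_add_eq {α : Type*} {f : ℕ → α} {c : ℕ}
    (hf : Function.Periodic f c) (hc : 0 < c) (n m : ℕ) : ∃ j < c, f (n + j) = f m := by
  have hm : m % c ∈ (Ico n (n + c)).image (· % c) := by
    rw [Nat.image_Ico_mod]
    exact mem_range.mpr (Nat.mod_lt m hc)
  obtain ⟨p, hp, hpm⟩ := mem_image.mp hm
  obtain ⟨hnp, hpc⟩ := mem_Ico.mp hp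
  refine ⟨p - n, by omega, ?_⟩
  rw [Nat.add_sub_cancel' hnp, ← hf.map_mod_nat, hpm, hf.map_mod_nat]

theorem norm_sub_le_of_norm_fderiv_apply_le {E F : Type*} [NormedAddCommGroup E]
    [NormedSpace ℝ E] [NormedAddCommGroup F] [NormedSpace ℝ F] {G : E → F}
    (hG : Differentiable ℝ G) {v : E} {β : ℝ} (hβ : ∀ w, ‖fderiv ℝ G w v‖ ≤ β) (y : E) (c : ℝ) :
    ‖G (y + c • v) - G y‖ ≤ β * |c| := by
  have hline : ∀ t : ℝ, HasDerivAt (fun t : ℝ => G (y + t • v)) (fderiv ℝ G (y + t • v) v) t :=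
    fun t => (hG _).hasFDerivAt.comp_hasDerivAt t
      (by simpa using ((hasDerivAt_id t).smul_const v).const_add y)
  simpa using convex_univ.norm_image_sub_le_of_norm_hasDerivWithin_le
    (fun t _ => (hline t).hasDerivWithinAt) (fun t _ => hβ (y + t • v))
    (Set.mem_univ 0) (Set.mem_univ c)

section Sweep

variable {ι : Type*} {d : ℕ → ι → ℝ} {e : ℕ → ι} {L : ℝ}

theorem abs_apply_le_add_sum_of_abs_sub_le
    (hstep : ∀ m i, |d (m + 1) i - d m i| ≤ L * |d m (e m)|) (n t : ℕ) (i : ι) :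
    |d n i| ≤ |d (n + t) i| + ∑ m ∈ range t, L * |d (n + m) (e (n + m))| := by
  calc |d n i| ≤ |d (n + t) i| + dist (d n i) (d (n + t) i) := by
        rw [Real.dist_eq]
        linarith [abs_sub_abs_le_abs_sub (d n i) (d (n + t) i)]
    _ ≤ |d (n + t) i| + ∑ m ∈ range t, dist (d (n + m) i) (d (n + m + 1) i) := by
        gcongr
        exact dist_le_range_sum_dist (fun m => d (n + m) i) t
    _ ≤ |d (n + t) i| + ∑ m ∈ range t, L * |d (n + m) (e (n + m))| := by
        gcongr with m
        rw [dist_comm, Real.dist_eq]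
        exact hstep (n + m) i

theorem sum_abs_apply_le_of_sweep [Fintype ι] [DecidableEq ι]
    (hstep : ∀ m i, |d (m + 1) i - d m i| ≤ L * |d m (e m)|) {n T : ℕ}
    (hsweep : ∀ i, ∃ j < T, e (n + j) = i) :
    ∑ i, |d n i| ≤
      (1 + ((Fintype.card ι : ℝ) - 1) * L) * ∑ j ∈ range T, |d (n + j) (e (n + j))| := by
  classical
  set S := ∑ j ∈ range T, |d (n + j) (e (n + j))|
  let k i := Nat.find (hsweep i)
  have hk_lt : ∀ i, k i < T := fun i => (Nat.find_spec (hsweep i)).1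
  have hk_eq : ∀ i, e (n + k i) = i := fun i => (Nat.find_spec (hsweep i)).2
  have hk_active : k (e n) = 0 := (Nat.find_eq_zero _).mpr ⟨Nat.zero_lt_of_lt (hk_lt (e n)), rfl⟩
  have hdrift_nonneg : ∀ m, 0 ≤ L * |d m (e m)| := fun m => (abs_nonneg _).trans (hstep m (e m))
  have hactive : ∑ i, |d (n + k i) i| ≤ S := by
    have hk_inj : Function.Injective k := fun a b hab => by rw [← hk_eq a, hab, hk_eq b]
    calc ∑ i, |d (n + k i) i| = ∑ j ∈ univ.image k, |d (n + j) (e (n + j))| := by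
          rw [sum_image fun a _ b _ hab => hk_inj hab]
          exact sum_congr rfl fun i _ => by rw [hk_eq]
      _ ≤ S := sum_le_sum_of_subset_of_nonneg
          (fun j hj => by obtain ⟨i, -, rfl⟩ := mem_image.mp hj; exact mem_range.mpr (hk_lt i))
          (fun _ _ _ => abs_nonneg _)
  have hdrift : ∀ i, ∑ m ∈ range (k i), L * |d (n + m) (e (n + m))| ≤ L * S := fun i => by
    rw [mul_sum]
    exact sum_le_sum_of_subset_of_nonneg (range_subset_range.mpr (hk_lt i).le)
      (fun _ _ _ => hdrift_nonneg _)
  have hdrift_total : ∑ i, ∑ m ∈ range (k i), L * |d (n + m) (e (n + m))| ≤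
      ((Fintype.card ι : ℝ) - 1) * (L * S) := by
    rw [← add_sum_erase _ _ (mem_univ (e n)), hk_active, range_zero, sum_empty, zero_add]
    calc _ ≤ (univ.erase (e n)).card • (L * S) := sum_le_card_nsmul _ _ _ fun i _ => hdrift i
      _ = _ := by
        rw [card_erase_of_mem (mem_univ _), card_univ, nsmul_eq_mul,
          Nat.cast_pred (Fintype.card_pos_iff.mpr ⟨e n⟩)]
  calc ∑ i, |d n i|
      ≤ ∑ i, (|d (n + k i) i| + ∑ m ∈ range (k i), L * |d (n + m) (e (n + m))|) :=
        sum_le_sum fun i _ => abs_apply_le_add_sum_of_abs_sub_le hstep n (k i) i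
    _ = ∑ i, |d (n + k i) i| + ∑ i, ∑ m ∈ range (k i), L * |d (n + m) (e (n + m))| :=
        sum_add_distrib
    _ ≤ S + ((Fintype.card ι : ℝ) - 1) * (L * S) := add_le_add hactive hdrift_total
    _ = _ := by ring

end Sweep

/-- Under the sequential update scheme hypotheses (`F` C² with second partials
bounded by `β`, update directions cycling with period `K̃` through a pattern hitting every
coordinate, one-coordinate steps of length at most `γ·|∂ₙF(xⁿ)|`), for every `n` the ℓ¹ norm
of the gradient satisfies
`∑ᵢ |∂F/∂xᵢ(xⁿ)| ≤ (1 + (K−1)·β·γ) · ∑_{j<K̃} |∂_{n+j}F(xⁿ⁺ʲ)|`. -/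
theorem sequential_update_l1_gradient_bound
    (K Ktil : ℕ) (hKtil : 0 < Ktil) (F : (Fin K → ℝ) → ℝ) (β γ : ℝ)
    (hF : ContDiff ℝ 2 F)
    (hbound : ∀ (x : Fin K → ℝ) (i j : Fin K),
      |fderiv ℝ (fun y => fderiv ℝ F y (Pi.single j 1 : Fin K → ℝ)) x
        (Pi.single i 1 : Fin K → ℝ)| ≤ β)
    (e : ℕ → Fin K) (he_per : Function.Periodic e Ktil)
    (he_surj : Function.Surjective e)
    (x : ℕ → Fin K → ℝ)
    (hdir : ∀ n, ∃ c : ℝ, x (n + 1) - x n = c • (Pi.single (e n) 1 : Fin K → ℝ))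
    (hlen : ∀ n, ‖x (n + 1) - x n‖ ≤
      γ * |fderiv ℝ F (x n) (Pi.single (e n) 1 : Fin K → ℝ)|) :
    ∀ n : ℕ,
      ∑ i : Fin K, |fderiv ℝ F (x n) (Pi.single i 1 : Fin K → ℝ)| ≤
        (1 + ((K : ℝ) - 1) * β * γ) *
          ∑ j ∈ Finset.range Ktil,
            |fderiv ℝ F (x (n + j)) (Pi.single (e (n + j)) 1 : Fin K → ℝ)| := by
  intro n
  have hβ : 0 ≤ β := (abs_nonneg _).trans (hbound (x 0) (e 0) (e 0))
  have hstep : ∀ m i, |fderiv ℝ F (x (m + 1)) (Pi.single i 1 : Fin K → ℝ) -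
      fderiv ℝ F (x m) (Pi.single i 1 : Fin K → ℝ)| ≤
        β * γ * |fderiv ℝ F (x m) (Pi.single (e m) 1 : Fin K → ℝ)| := by
    intro m i
    obtain ⟨c, hc⟩ := hdir m
    rw [sub_eq_iff_eq_add'] at hc
    have hpartial : Differentiable ℝ fun y => fderiv ℝ F y (Pi.single i 1 : Fin K → ℝ) :=
      ((hF.fderiv_right (m := 1) (by norm_num)).clm_apply contDiff_const).differentiable one_ne_zero
    have hc_norm : |c| = ‖x (m + 1) - x m‖ := by simp [hc, norm_smul, Pi.norm_single]
    calc _ ≤ β * |c| := by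
          simpa only [hc, Real.norm_eq_abs] using
            norm_sub_le_of_norm_fderiv_apply_le hpartial (fun w => hbound w (e m) i) (x m) c
      _ ≤ β * (γ * |fderiv ℝ F (x m) (Pi.single (e m) 1 : Fin K → ℝ)|) := by
          rw [hc_norm]
          exact mul_le_mul_of_nonneg_left (hlen m) hβ
      _ = _ := (mul_assoc _ _ _).symm
  have hsweep : ∀ i, ∃ j < Ktil, e (n + j) = i := fun i => by
    obtain ⟨m, rfl⟩ := he_surj i
    exact he_per.exists_lt_apply_add_eq hKtil n m
  simpa [mul_assoc] using sum_abs_apply_le_of_sweep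
    (d := fun m i => fderiv ℝ F (x m) (Pi.single i 1 : Fin K → ℝ)) hstep hsweep
end

section
/- Let F : ℝ^K → ℝ be C² with all second partial derivatives bounded in absolute value by β, and let (x^n) be a sequence generated by a sequential coordinate update scheme satisfying F(x^{n+1}) − F(x^n) ≥ μ·|∂ₙF(x^n)|² for a fixed μ > 0 (where ∂ₙF is the partial derivative in the direction updated at step n) and ‖x^{n+1} − x^n‖ ≤ γ·|∂ₙF(x^n)|, the update directions cycling through a list containing every standard basis vector eᵢ with period K̃. If the sequence F(x^n) remains bounded above, then Σ_{n=0}^∞ |∂ₙF(x^n)|² ≤ (1/μ)·(lim_{n→∞} F(x^n) − F(x⁰)) < ∞, hence ∂ₙF(x^n) → 0 and ‖dF(x^n)‖ → 0 as n → ∞. -/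
/-! Since `F (x n)` increases by at least `μ |∂ₙF(xⁿ)|²` per step and is bounded above, the
squared local gradients are summable, so `∂ₙF(xⁿ) → 0`. The bound on second partials lets every
partial derivative move by at most `β γ |∂ₙF(xⁿ)|` per step, and by periodicity each coordinate is
updated somewhere in every window of `Ktil` consecutive steps. Hence each `|∂ᵢF(xⁿ)|` is bounded by
a window sum of a null sequence, and `‖dF(xⁿ)‖ ≤ ∑ᵢ |∂ᵢF(xⁿ)|`. -/

open Filter Finset Topology

theorem exists_tendsto_summable_of_mul_le_sub {f s : ℕ → ℝ} {μ : ℝ} (hμ : 0 < μ)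
    (hs : ∀ n, 0 ≤ s n) (hinc : ∀ n, μ * s n ≤ f (n + 1) - f n)
    (hbdd : BddAbove (Set.range f)) :
    ∃ L, Tendsto f atTop (𝓝 L) ∧ Summable s ∧ ∑' n, s n ≤ 1 / μ * (L - f 0) := by
  have hmono : Monotone f := monotone_nat_of_le_succ fun n => by
    nlinarith [hinc n, hs n]
  have hpartial : ∀ N, ∑ n ∈ range N, s n ≤ 1 / μ * ((⨆ n, f n) - f 0) := by
    intro N
    have htel : μ * ∑ n ∈ range N, s n ≤ f N - f 0 := by
      rw [mul_sum, ← sum_range_sub]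
      exact sum_le_sum fun n _ => hinc n
    rw [one_div_mul_eq_div, le_div_iff₀ hμ]
    linarith [le_ciSup hbdd N]
  have hsum : Summable s := summable_of_sum_range_le hs hpartial
  exact ⟨_, tendsto_atTop_ciSup hmono hbdd, hsum, hsum.tsum_le_of_sum_range_le hpartial⟩

theorem Function.Periodic.exists_mem_Ico_eq {α : Type*} {f : ℕ → α} {c : ℕ}
    (hf : Function.Periodic f c) (hc : 0 < c) (n m : ℕ) :
    ∃ j ∈ Ico n (n + c), f j = f m := by
  have hshift : n + (m + c * n - n) = m + c * n := by
    have := Nat.le_mul_of_pos_left n hc; omega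
  refine ⟨n + (m + c * n - n) % c, by simp [Nat.mod_lt _ hc], ?_⟩
  rw [← hf.map_mod_nat, Nat.add_mod_mod, hshift, Nat.add_mul_mod_self_left, hf.map_mod_nat]

theorem abs_le_sum_Ico_of_abs_sub_le {u d : ℕ → ℝ} (hstep : ∀ n, |u (n + 1) - u n| ≤ d n)
    {n j N : ℕ} (hj : j ∈ Ico n (n + N)) (hhit : |u j| ≤ d j) :
    |u n| ≤ ∑ k ∈ Ico n (n + N), d k := by
  rw [mem_Ico] at hj
  have hd : ∀ k, 0 ≤ d k := fun k => (abs_nonneg _).trans (hstep k)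
  have hdrift : |u j - u n| ≤ ∑ k ∈ Ico n j, d k := by
    rw [abs_sub_comm, ← Real.dist_eq]
    exact dist_le_Ico_sum_of_dist_le (f := u) hj.1 fun _ _ => by
      rw [Real.dist_eq, abs_sub_comm]; exact hstep _
  calc |u n| ≤ |u j| + |u j - u n| := by
        linarith [abs_sub_abs_le_abs_sub (u n) (u j), abs_sub_comm (u n) (u j)]
    _ ≤ ∑ k ∈ Ico n (j + 1), d k := by
        rw [sum_Ico_succ_top hj.1]; linarith
    _ ≤ ∑ k ∈ Ico n (n + N), d k :=
        sum_le_sum_of_subset_of_nonneg (Ico_subset_Ico_right (by omega)) fun k _ _ => hd k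

theorem tendsto_zero_of_abs_sub_le_of_abs_le_in_windows {u d : ℕ → ℝ} {N : ℕ}
    (hd : Tendsto d atTop (𝓝 0)) (hstep : ∀ n, |u (n + 1) - u n| ≤ d n)
    (hhit : ∀ n, ∃ j ∈ Ico n (n + N), |u j| ≤ d j) :
    Tendsto u atTop (𝓝 0) := by
  have hwindow : Tendsto (fun n => ∑ k ∈ Ico n (n + N), d k) atTop (𝓝 0) := by
    simp only [sum_Ico_eq_sum_range, add_tsub_cancel_left]
    simpa using tendsto_finsetSum (range N) fun m _ => hd.comp (tendsto_add_atTop_nat m)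
  refine squeeze_zero_norm (fun n => ?_) hwindow
  obtain ⟨j, hj, hhit_j⟩ := hhit n
  exact abs_le_sum_Ico_of_abs_sub_le hstep hj hhit_j

theorem abs_sub_le_of_abs_fderiv_apply_le {E : Type*} [NormedAddCommGroup E] [NormedSpace ℝ E]
    {g : E → ℝ} (hg : Differentiable ℝ g) {v : E} {B : ℝ} (hB : ∀ z, |fderiv ℝ g z v| ≤ B)
    (x : E) (c : ℝ) : |g (x + c • v) - g x| ≤ B * |c| := by
  have hline : ∀ t : ℝ, HasDerivAt (fun t : ℝ => g (x + t • v)) (fderiv ℝ g (x + t • v) v) t :=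
    fun t => (hg _).hasFDerivAt.comp_hasDerivAt t
      (by simpa using ((hasDerivAt_id t).smul_const v).const_add x)
  simpa using convex_univ.norm_image_sub_le_of_norm_hasDerivWithin_le
    (fun t _ => (hline t).hasDerivWithinAt) (fun t _ => hB _) (Set.mem_univ 0) (Set.mem_univ c)

theorem ContinuousLinearMap.norm_le_sum_abs_apply_single {ι : Type*} [Fintype ι] [DecidableEq ι]
    (L : (ι → ℝ) →L[ℝ] ℝ) : ‖L‖ ≤ ∑ i, |L (Pi.single i 1)| := by
  refine L.opNorm_le_bound (sum_nonneg fun i _ => abs_nonneg _) fun v => ?_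
  calc ‖L v‖ = |∑ i, v i * L (Pi.single i 1)| := by
        conv_lhs => rw [pi_eq_sum_univ' v]
        simp [Real.norm_eq_abs]
    _ ≤ ∑ i, |v i| * |L (Pi.single i 1)| := by
        simpa only [abs_mul] using abs_sum_le_sum_abs (fun i => v i * L (Pi.single i 1)) univ
    _ ≤ ∑ i, ‖v‖ * |L (Pi.single i 1)| :=
        sum_le_sum fun i _ => by gcongr; exact norm_le_pi_norm v i
    _ = (∑ i, |L (Pi.single i 1)|) * ‖v‖ := by rw [← mul_sum, mul_comm]

theorem sequential_update_gradient_vanishes_general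
    (K Ktil : ℕ) (hKtil : 0 < Ktil) (F : (Fin K → ℝ) → ℝ) (β μ γ : ℝ)
    (hμ : 0 < μ)
    (hF : ContDiff ℝ 2 F)
    (hbound : ∀ (x : Fin K → ℝ) (i j : Fin K),
      |fderiv ℝ (fun y => fderiv ℝ F y (Pi.single j 1 : Fin K → ℝ)) x
        (Pi.single i 1 : Fin K → ℝ)| ≤ β)
    (e : ℕ → Fin K) (he_per : Function.Periodic e Ktil)
    (he_surj : Function.Surjective e)
    (x : ℕ → Fin K → ℝ)
    (hdir : ∀ n, ∃ c : ℝ, x (n + 1) - x n = c • (Pi.single (e n) 1 : Fin K → ℝ))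
    (hinc : ∀ n, F (x (n + 1)) - F (x n) ≥
      μ * (fderiv ℝ F (x n) (Pi.single (e n) 1 : Fin K → ℝ)) ^ 2)
    (hlen : ∀ n, ‖x (n + 1) - x n‖ ≤
      γ * |fderiv ℝ F (x n) (Pi.single (e n) 1 : Fin K → ℝ)|)
    (hbdd : BddAbove (Set.range fun n => F (x n))) :
    ∃ L : ℝ,
      Filter.Tendsto (fun n => F (x n)) Filter.atTop (nhds L) ∧
      Summable (fun n =>
        |fderiv ℝ F (x n) (Pi.single (e n) 1 : Fin K → ℝ)| ^ 2) ∧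
      (∑' n : ℕ, |fderiv ℝ F (x n) (Pi.single (e n) 1 : Fin K → ℝ)| ^ 2) ≤
        (1 / μ) * (L - F (x 0)) ∧
      Filter.Tendsto
        (fun n => fderiv ℝ F (x n) (Pi.single (e n) 1 : Fin K → ℝ))
        Filter.atTop (nhds 0) ∧
      Filter.Tendsto (fun n => ‖fderiv ℝ F (x n)‖) Filter.atTop (nhds 0) := by
  set g : ℕ → ℝ := fun n => fderiv ℝ F (x n) (Pi.single (e n) 1)
  obtain ⟨L, hL, hsum, htsum⟩ := exists_tendsto_summable_of_mul_le_sub (s := fun n => |g n| ^ 2)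
    hμ (fun n => sq_nonneg _) (fun n => by simpa only [sq_abs] using hinc n) hbdd
  have hg : Tendsto g atTop (𝓝 0) := by
    have habs : Tendsto (fun n => |g n|) atTop (𝓝 0) := by
      simpa [Real.sqrt_sq_eq_abs] using hsum.tendsto_atTop_zero.sqrt
    exact (tendsto_zero_iff_abs_tendsto_zero g).2 habs
  have hβ : 0 ≤ β := (abs_nonneg _).trans (hbound (x 0) (e 0) (e 0))
  have hpartial (i : Fin K) : Tendsto (fun n => fderiv ℝ F (x n) (Pi.single i 1)) atTop (𝓝 0) := by
    have hdiff : Differentiable ℝ fun y => fderiv ℝ F y (Pi.single i 1) :=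
      ((hF.fderiv_right le_rfl).differentiable one_ne_zero).clm_apply (differentiable_const _)
    refine tendsto_zero_of_abs_sub_le_of_abs_le_in_windows (N := Ktil)
      (d := fun n => max 1 (β * γ) * |g n|) (by simpa using hg.abs.const_mul (max 1 (β * γ)))
      (fun n => ?_) (fun n => ?_)
    · obtain ⟨c, hc⟩ := hdir n
      have hc_le : |c| ≤ γ * |g n| := by simpa [hc, norm_smul, Pi.norm_single] using hlen n
      rw [eq_add_of_sub_eq' hc]
      calc _ ≤ β * |c| := abs_sub_le_of_abs_fderiv_apply_le hdiff (fun z => hbound z (e n) i) _ _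
        _ ≤ β * γ * |g n| := by rw [mul_assoc]; exact mul_le_mul_of_nonneg_left hc_le hβ
        _ ≤ _ := by gcongr; exact le_max_right _ _
    · obtain ⟨m, rfl⟩ := he_surj i
      obtain ⟨j, hj, hej⟩ := he_per.exists_mem_Ico_eq hKtil n m
      exact ⟨j, hj, by rw [← hej]; exact le_mul_of_one_le_left (abs_nonneg _) (le_max_left _ _)⟩
  refine ⟨L, hL, hsum, htsum, hg, squeeze_zero (fun n => norm_nonneg _)
    (fun n => (fderiv ℝ F (x n)).norm_le_sum_abs_apply_single) ?_⟩
  simpa using tendsto_finsetSum univ fun i _ => (hpartial i).abs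

/-- Under the sequential update scheme hypotheses, if the values `F(xⁿ)` remain
bounded above, then they converge to some limit `L`, the squared local gradients are summable
with `∑ₙ |∂ₙF(xⁿ)|² ≤ (1/μ)·(L − F(x⁰))`, and consequently `∂ₙF(xⁿ) → 0` and
`‖dF(xⁿ)‖ → 0` as `n → ∞`. -/
theorem sequential_update_gradient_vanishes
    (K Ktil : ℕ) (hKtil : 0 < Ktil) (F : (Fin K → ℝ) → ℝ) (β μ γ : ℝ)
    (hμ : 0 < μ) (hγ : 0 < γ)
    (hF : ContDiff ℝ 2 F)
    (hbound : ∀ (x : Fin K → ℝ) (i j : Fin K),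
      |fderiv ℝ (fun y => fderiv ℝ F y (Pi.single j 1 : Fin K → ℝ)) x
        (Pi.single i 1 : Fin K → ℝ)| ≤ β)
    (e : ℕ → Fin K) (he_per : Function.Periodic e Ktil)
    (he_surj : Function.Surjective e)
    (x : ℕ → Fin K → ℝ)
    (hdir : ∀ n, ∃ c : ℝ, x (n + 1) - x n = c • (Pi.single (e n) 1 : Fin K → ℝ))
    (hinc : ∀ n, F (x (n + 1)) - F (x n) ≥
      μ * (fderiv ℝ F (x n) (Pi.single (e n) 1 : Fin K → ℝ)) ^ 2)
    (hlen : ∀ n, ‖x (n + 1) - x n‖ ≤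
      γ * |fderiv ℝ F (x n) (Pi.single (e n) 1 : Fin K → ℝ)|)
    (hbdd : BddAbove (Set.range fun n => F (x n))) :
    ∃ L : ℝ,
      Filter.Tendsto (fun n => F (x n)) Filter.atTop (nhds L) ∧
      Summable (fun n =>
        |fderiv ℝ F (x n) (Pi.single (e n) 1 : Fin K → ℝ)| ^ 2) ∧
      (∑' n : ℕ, |fderiv ℝ F (x n) (Pi.single (e n) 1 : Fin K → ℝ)| ^ 2) ≤
        (1 / μ) * (L - F (x 0)) ∧
      Filter.Tendsto
        (fun n => fderiv ℝ F (x n) (Pi.single (e n) 1 : Fin K → ℝ))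
        Filter.atTop (nhds 0) ∧
      Filter.Tendsto (fun n => ‖fderiv ℝ F (x n)‖) Filter.atTop (nhds 0) :=
  sequential_update_gradient_vanishes_general K Ktil hKtil F β μ γ hμ hF hbound e he_per he_surj x
    hdir hinc hlen hbdd
end

section
/- Let B ∈ M_N(ℂ) be skew-Hermitian with an orthonormal basis of eigenvectors v₁, …, v_N and purely imaginary eigenvalues λ₁, …, λ_N (B·v_r = λ_r·v_r), let C ∈ M_N(ℂ) and Δt > 0, and set J = ∫₀^{Δt} e^{τB}·C·e^{−τB} dτ. Then for all r, s: ⟨v_r, J·v_s⟩ = γ(ω_{rs}·Δt)·⟨v_r, C·v_s⟩·Δt, where ω_{rs} = λ_r − λ_s and γ(z) = (e^z − 1)/z for z ≠ 0, γ(0) = 1. -/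
/-!
Because `B` is skew-Hermitian and `λ_r` is purely imaginary, `v_r^*` is a left eigenvector of
`B` for the same eigenvalue `λ_r`. Hence `v_r^* e^{τB} = e^{τλ_r} v_r^*` and
`e^{-τB} v_s = e^{-τλ_s} v_s`, so the matrix element of the integrand is
`e^{τ ω_{rs}} ⟨v_r, C v_s⟩`, and `∫₀^{Δt} e^{τω} dτ = γ(ωΔt) Δt`.
-/

open Matrix
open scoped Matrix.Norms.L2Operator

noncomputable def gammaFn (z : ℂ) : ℂ := if z = 0 then 1 else (Complex.exp z - 1) / z

namespace Matrix

variable {𝕂 n : Type*} [RCLike 𝕂] [Fintype n]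

theorem star_vecMul_of_conjTranspose_eq_neg {B : Matrix n n ℂ} (hB : Bᴴ = -B) {w : n → ℂ}
    {μ : ℂ} (hw : B *ᵥ w = μ • w) (hμ : μ.re = 0) : star w ᵥ* B = μ • star w := by
  have hconj : star μ = -μ := Complex.ext (by simp [hμ]) (by simp)
  rw [← conjTranspose_conjTranspose B, ← star_mulVec, hB, neg_mulVec, hw, star_neg, star_smul,
    hconj, neg_smul, neg_neg]

variable [DecidableEq n]

theorem exp_mulVec_of_mulVec_eq_smul {A : Matrix n n 𝕂} {w : n → 𝕂} {μ : 𝕂}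
    (h : A *ᵥ w = μ • w) : NormedSpace.exp A *ᵥ w = NormedSpace.exp μ • w := by
  have hpow : ∀ k : ℕ, A ^ k *ᵥ w = μ ^ k • w := fun k => by
    induction k with
    | zero => simp
    | succ k ih => rw [pow_succ', ← mulVec_mulVec, ih, mulVec_smul, h, smul_smul, ← pow_succ]
  have hseries := (NormedSpace.exp_series_hasSum_exp' (𝕂 := 𝕂) A).map
    (mulVec.addMonoidHomLeft w) (continuous_id.matrix_mulVec continuous_const)
  refine hseries.unique ?_
  convert (NormedSpace.exp_series_hasSum_exp' (𝕂 := 𝕂) μ).smul_const w using 1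
  ext k : 1
  simp [mulVec.addMonoidHomLeft, smul_mulVec, hpow, smul_smul]

theorem vecMul_exp_of_vecMul_eq_smul {A : Matrix n n 𝕂} {u : n → 𝕂} {μ : 𝕂}
    (h : u ᵥ* A = μ • u) : u ᵥ* NormedSpace.exp A = NormedSpace.exp μ • u := by
  rw [← mulVec_transpose, ← exp_transpose]
  exact exp_mulVec_of_mulVec_eq_smul (by rwa [mulVec_transpose])

theorem dotProduct_exp_conj_mulVec {A : Matrix n n ℂ} {u w : n → ℂ} {α β : ℂ}
    (hu : u ᵥ* A = α • u) (hw : A *ᵥ w = β • w) (C : Matrix n n ℂ) (τ : ℝ) :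
    u ⬝ᵥ ((NormedSpace.exp (τ • A) * C * NormedSpace.exp ((-τ) • A)) *ᵥ w) =
      Complex.exp ((α - β) * τ) * (u ⬝ᵥ (C *ᵥ w)) := by
  have hu' : u ᵥ* NormedSpace.exp (τ • A) = Complex.exp (τ * α) • u := by
    rw [Complex.exp_eq_exp_ℂ]
    exact vecMul_exp_of_vecMul_eq_smul (by rw [vecMul_smul, hu, ← Complex.coe_smul, smul_smul])
  have hw' : NormedSpace.exp ((-τ) • A) *ᵥ w = Complex.exp (-τ * β) • w := by
    rw [Complex.exp_eq_exp_ℂ]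
    refine exp_mulVec_of_mulVec_eq_smul ?_
    rw [smul_mulVec, hw, ← Complex.coe_smul, smul_smul]
    push_cast
    ring_nf
  rw [← mulVec_mulVec, hw', mulVec_smul, dotProduct_smul, ← mulVec_mulVec, dotProduct_mulVec,
    hu', smul_dotProduct, smul_smul, smul_eq_mul, ← Complex.exp_add]
  ring_nf

theorem dotProduct_intervalIntegral_mulVec {f : ℝ → Matrix n n ℂ} {a b : ℝ}
    (hf : IntervalIntegrable f MeasureTheory.volume a b) (u w : n → ℂ) :
    u ⬝ᵥ ((∫ τ in a..b, f τ) *ᵥ w) = ∫ τ in a..b, u ⬝ᵥ (f τ *ᵥ w) := by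
  let matrixElement : Matrix n n ℂ →L[ℂ] ℂ := LinearMap.toContinuousLinearMap
    { toFun := fun M => u ⬝ᵥ (M *ᵥ w)
      map_add' := fun M N => by rw [add_mulVec, dotProduct_add]
      map_smul' := fun c M => by rw [smul_mulVec, dotProduct_smul, RingHom.id_apply] }
  exact (matrixElement.intervalIntegral_comp_comm hf).symm

end Matrix

theorem NormedSpace.continuous_exp_smul {𝕂 𝔸 : Type*} [RCLike 𝕂] [NormedRing 𝔸]
    [NormedAlgebra 𝕂 𝔸] [CompleteSpace 𝔸] (x : 𝔸) : Continuous fun t : 𝕂 => exp (t • x) :=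
  continuous_iff_continuousAt.2 fun t => (hasDerivAt_exp_smul_const x t).continuousAt

theorem integral_cexp_mul_eq_gammaFn (ω : ℂ) (T : ℝ) :
    ∫ τ in (0 : ℝ)..T, Complex.exp (ω * τ) = gammaFn (ω * T) * T := by
  by_cases hω : ω = 0
  · simp [hω, gammaFn]
  by_cases hT : (T : ℂ) = 0
  · simp [Complex.ofReal_eq_zero.mp hT]
  rw [integral_exp_mul_complex hω, gammaFn, if_neg (mul_ne_zero hω hT)]
  field_simp
  simp

theorem gradient_integral_eigenbasis_matrix_elements_general
    (N : ℕ) (B C : Matrix (Fin N) (Fin N) ℂ)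
    (hB : Bᴴ = -B)
    (v : Fin N → Fin N → ℂ) (l : Fin N → ℂ)
    (heig : ∀ r : Fin N, B *ᵥ v r = l r • v r)
    (himag : ∀ r : Fin N, (l r).re = 0)
    (Δt : ℝ) :
    ∀ r s : Fin N,
      star (v r) ⬝ᵥ
          ((∫ τ in (0 : ℝ)..Δt,
              NormedSpace.exp (τ • B) * C * NormedSpace.exp ((-τ) • B)) *ᵥ v s) =
        gammaFn ((l r - l s) * Δt) * (star (v r) ⬝ᵥ (C *ᵥ v s)) * Δt := by
  intro r s
  have hexp := NormedSpace.continuous_exp_smul (𝕂 := ℝ) B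
  have hcont : Continuous fun τ : ℝ => NormedSpace.exp (τ • B) * C * NormedSpace.exp ((-τ) • B) :=
    (hexp.mul continuous_const).mul (hexp.comp continuous_neg)
  have hleft := star_vecMul_of_conjTranspose_eq_neg hB (heig r) (himag r)
  rw [dotProduct_intervalIntegral_mulVec (hcont.intervalIntegrable 0 Δt)]
  simp only [dotProduct_exp_conj_mulVec hleft (heig s)]
  rw [intervalIntegral.integral_mul_const, integral_cexp_mul_eq_gammaFn]
  ring

/-- if `B` is skew-Hermitian with orthonormal eigenvectors `v r` and purely
imaginary eigenvalues `l r`, then the matrix elements of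
`J = ∫₀^{Δt} e^{τB} C e^{−τB} dτ` in this eigenbasis are
`⟨v_r, J v_s⟩ = γ(ω_{rs}Δt)·⟨v_r, C v_s⟩·Δt` where `ω_{rs} = λ_r − λ_s`. -/
theorem gradient_integral_eigenbasis_matrix_elements
    (N : ℕ) (B C : Matrix (Fin N) (Fin N) ℂ)
    (hB : Bᴴ = -B)
    (v : Fin N → Fin N → ℂ) (l : Fin N → ℂ)
    (horth : ∀ r s : Fin N, star (v r) ⬝ᵥ v s = if r = s then 1 else 0)
    (heig : ∀ r : Fin N, B *ᵥ v r = l r • v r)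
    (himag : ∀ r : Fin N, (l r).re = 0)
    (Δt : ℝ) (hΔt : 0 < Δt) :
    ∀ r s : Fin N,
      star (v r) ⬝ᵥ
          ((∫ τ in (0 : ℝ)..Δt,
              NormedSpace.exp (τ • B) * C * NormedSpace.exp ((-τ) • B)) *ᵥ v s) =
        gammaFn ((l r - l s) * Δt) * (star (v r) ⬝ᵥ (C *ᵥ v s)) * Δt :=
  gradient_integral_eigenbasis_matrix_elements_general N B C hB v l heig himag Δt
end

section
/- Let λ_r, λ_q, λ_s ∈ ℂ with λ_q ≠ λ_s, let Δt > 0, and write ω_{ab} = λ_a − λ_b and γ(z) = (e^z − 1)/z for z ≠ 0, γ(0) = 1. Then e^{−λ_r·Δt} · ∫₀^{Δt} ∫₀^{τ} e^{λ_r·τ}·e^{−λ_q·(τ−σ)}·e^{−λ_s·σ} dσ dτ = (Δt·e^{−λ_r·Δt}/ω_{qs})·[γ(ω_{rs}·Δt) − γ(ω_{rq}·Δt)]. -/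
/-!
Proof idea: the integrand is `e^{(λ_r − λ_q)τ} e^{(λ_q − λ_s)σ}`, so since `λ_q ≠ λ_s` the inner
integral is `(e^{(λ_r − λ_s)τ} − e^{(λ_r − λ_q)τ}) / (λ_q − λ_s)`, and `∫₀^T e^{aτ} dτ = T γ(aT)`
turns the outer integral into the difference of the two `γ` values.
-/

open Complex intervalIntegral

theorem integral_cexp_mul_eq_mul_gammaFn (a : ℂ) (T : ℝ) :
    ∫ τ in (0 : ℝ)..T, exp (a * τ) = T * gammaFn (a * T) := by
  rcases eq_or_ne a 0 with rfl | ha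
  · simp [gammaFn]
  rcases eq_or_ne (T : ℂ) 0 with hT | hT
  · simp [ofReal_eq_zero.mp hT]
  rw [integral_exp_mul_complex ha, gammaFn, if_neg (mul_ne_zero ha hT)]
  field_simp
  simp

theorem integral_cexp_mul_cexp_mul_sub_mul_cexp (lr lq ls : ℂ) (hqs : lq ≠ ls) (τ : ℝ) :
    ∫ σ in (0 : ℝ)..τ, exp (lr * τ) * exp (-lq * (τ - σ)) * exp (-ls * σ) =
      (exp ((lr - ls) * τ) - exp ((lr - lq) * τ)) / (lq - ls) := by
  have hfactor : ∀ σ : ℝ, exp (lr * τ) * exp (-lq * (τ - σ)) * exp (-ls * σ) =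
      exp ((lr - lq) * τ) * exp ((lq - ls) * σ) := by
    intro σ
    simp only [← exp_add]
    ring_nf
  simp_rw [hfactor]
  rw [integral_const_mul, integral_exp_mul_complex (sub_ne_zero.mpr hqs), ofReal_zero, mul_zero,
    exp_zero, mul_div_assoc', mul_sub, ← exp_add, mul_one]
  ring_nf

theorem hessian_coefficient_double_integral_general
    (lr lq ls : ℂ) (hqs : lq ≠ ls) (Δt : ℝ) :
    Complex.exp (-lr * Δt) *
        ∫ τ in (0 : ℝ)..Δt, ∫ σ in (0 : ℝ)..τ,
          Complex.exp (lr * τ) * Complex.exp (-lq * (τ - σ)) * Complex.exp (-ls * σ) =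
      ((Δt : ℂ) * Complex.exp (-lr * Δt) / (lq - ls)) *
        (gammaFn ((lr - ls) * Δt) - gammaFn ((lr - lq) * Δt)) := by
  have hint : ∀ b : ℂ, IntervalIntegrable (fun τ : ℝ => exp (b * τ)) MeasureTheory.volume 0 Δt :=
    fun b => (by fun_prop : Continuous fun τ : ℝ => exp (b * τ)).intervalIntegrable _ _
  simp_rw [integral_cexp_mul_cexp_mul_sub_mul_cexp lr lq ls hqs]
  rw [integral_div, integral_sub (hint _) (hint _), integral_cexp_mul_eq_mul_gammaFn,
    integral_cexp_mul_eq_mul_gammaFn]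
  ring

/-- for `λ_q ≠ λ_s` and `Δt > 0`, with `ω_{ab} = λ_a − λ_b`,
`e^{−λ_rΔt}·∫₀^{Δt}∫₀^τ e^{λ_rτ}e^{−λ_q(τ−σ)}e^{−λ_sσ} dσ dτ
  = (Δt·e^{−λ_rΔt}/ω_{qs})·[γ(ω_{rs}Δt) − γ(ω_{rq}Δt)]`. -/
theorem hessian_coefficient_double_integral
    (lr lq ls : ℂ) (hqs : lq ≠ ls) (Δt : ℝ) (hΔt : 0 < Δt) :
    Complex.exp (-lr * Δt) *
        ∫ τ in (0 : ℝ)..Δt, ∫ σ in (0 : ℝ)..τ,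
          Complex.exp (lr * τ) * Complex.exp (-lq * (τ - σ)) * Complex.exp (-ls * σ) =
      ((Δt : ℂ) * Complex.exp (-lr * Δt) / (lq - ls)) *
        (gammaFn ((lr - ls) * Δt) - gammaFn ((lr - lq) * Δt)) :=
  hessian_coefficient_double_integral_general lr lq ls hqs Δt
end

section
/- Let λ₁ ≤ λ₂ ≤ ⋯ ≤ λ_n be real numbers and g ∈ ℝⁿ with g ≠ 0, and define φ(μ) = −(Σ_{k=1}^n g_k²/(λ_k − μ)²)^{−1/2} for μ < λ₁. Then φ is differentiable on (−∞, λ₁) with φ′(μ) = −φ(μ)³·Σ_{k=1}^n g_k²/(λ_k − μ)³ > 0, and φ is convex and strictly increasing on (−∞, min{λ₁, 0}). -/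
/-!
Writing `Sₘ(μ) = ∑ₖ gₖ² / (λₖ − μ)ᵐ`, we have `φ = −S₂^{−1/2}` and `S₂′ = 2 S₃`, `S₃′ = 3 S₄`, so
`φ′ = −φ³ S₃`, which is positive because `φ < 0` and `S₃ > 0` below `λ₁`. Differentiating once more
gives `φ″ = 3 φ³ (φ² S₃² − S₄)`; since `φ² = 1 / S₂`, its sign is that of `S₂ S₄ − S₃²`, which is
nonnegative by Cauchy–Schwarz. Convexity and strict monotonicity then follow from the signs of `φ″`
and `φ′`.
-/

open Set

lemma HasDerivAt.neg_inv_sqrt {f : ℝ → ℝ} {f' x : ℝ} (hf : HasDerivAt f f' x) (hx : 0 < f x) :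
    HasDerivAt (fun y => -(√(f y))⁻¹) (f' / 2 * (√(f x))⁻¹ ^ 3) x := by
  have hs : √(f x) ≠ 0 := (Real.sqrt_pos.mpr hx).ne'
  refine ((hf.sqrt hx.ne').inv hs).neg.congr_deriv ?_
  field_simp

lemma hasDerivAt_div_sub_pow (c a μ : ℝ) (m : ℕ) (h : a - μ ≠ 0) :
    HasDerivAt (fun ν => c / (a - ν) ^ m) (m * (c / (a - μ) ^ (m + 1))) μ := by
  have hsub : HasDerivAt (fun ν => a - ν) (-1) μ := by
    simpa using (hasDerivAt_id μ).const_sub a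
  refine ((hasDerivAt_const μ c).div (hsub.pow m) (pow_ne_zero _ h)).congr_deriv ?_
  cases m with
  | zero => simp
  | succ m =>
    simp only [Pi.pow_apply, Nat.add_sub_cancel]
    field_simp
    ring

namespace TrustRegion

variable {ι : Type*} [Fintype ι] (g a : ι → ℝ)

/-- `⟪g, (A − μ)⁻ᵐ g⟫` for a symmetric `A` with eigenvalues `a` and `g` written in its eigenbasis. -/
noncomputable def resolventMoment (m : ℕ) (μ : ℝ) : ℝ := ∑ k, g k ^ 2 / (a k - μ) ^ m

noncomputable def phi (μ : ℝ) : ℝ := -(√(resolventMoment g a 2 μ))⁻¹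

variable {g a} {μ : ℝ}

lemma resolventMoment_pos (hg : g ≠ 0) (hμ : ∀ k, μ < a k) (m : ℕ) :
    0 < resolventMoment g a m μ := by
  obtain ⟨k₀, hk₀⟩ : ∃ k, g k ≠ 0 := Function.ne_iff.mp hg
  refine Finset.sum_pos' (fun k _ => ?_) ⟨k₀, Finset.mem_univ _, ?_⟩
  · have := sub_pos.mpr (hμ k)
    positivity
  · have := sub_pos.mpr (hμ k₀)
    positivity

lemma hasDerivAt_resolventMoment (hμ : ∀ k, a k ≠ μ) (m : ℕ) :
    HasDerivAt (resolventMoment g a m) (m * resolventMoment g a (m + 1) μ) μ := by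
  have := HasDerivAt.fun_sum (u := Finset.univ) fun k _ =>
    hasDerivAt_div_sub_pow (g k ^ 2) (a k) μ m (sub_ne_zero.mpr (hμ k))
  rwa [← Finset.mul_sum] at this

lemma resolventMoment_two_nonneg : 0 ≤ resolventMoment g a 2 μ :=
  Finset.sum_nonneg fun _ _ => by positivity

lemma sq_resolventMoment_three_le :
    resolventMoment g a 3 μ ^ 2 ≤ resolventMoment g a 2 μ * resolventMoment g a 4 μ := by
  have hcs := Finset.sum_mul_sq_le_sq_mul_sq Finset.univ
    (fun k => g k / (a k - μ)) (fun k => g k / (a k - μ) ^ 2)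
  have hmul : ∀ k, g k / (a k - μ) * (g k / (a k - μ) ^ 2) = g k ^ 2 / (a k - μ) ^ 3 := fun k => by
    rw [div_mul_div_comm, ← sq, ← pow_succ']
  simpa only [resolventMoment, hmul, div_pow, ← pow_mul] using hcs

lemma phi_neg (hg : g ≠ 0) (hμ : ∀ k, μ < a k) : phi g a μ < 0 :=
  neg_neg_of_pos (inv_pos.mpr (Real.sqrt_pos.mpr (resolventMoment_pos hg hμ 2)))

lemma phi_sq : phi g a μ ^ 2 = (resolventMoment g a 2 μ)⁻¹ := by
  rw [phi, neg_sq, inv_pow, Real.sq_sqrt resolventMoment_two_nonneg]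

lemma hasDerivAt_phi (hg : g ≠ 0) (hμ : ∀ k, μ < a k) :
    HasDerivAt (phi g a) (-phi g a μ ^ 3 * resolventMoment g a 3 μ) μ := by
  refine ((hasDerivAt_resolventMoment (fun k => (hμ k).ne') 2).neg_inv_sqrt
    (resolventMoment_pos hg hμ 2)).congr_deriv ?_
  rw [phi]
  push_cast
  ring

lemma deriv_phi_pos (hg : g ≠ 0) (hμ : ∀ k, μ < a k) :
    0 < -phi g a μ ^ 3 * resolventMoment g a 3 μ :=
  mul_pos (neg_pos.mpr (Odd.pow_neg (by decide) (phi_neg hg hμ))) (resolventMoment_pos hg hμ 3)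

lemma hasDerivAt_deriv_phi (hg : g ≠ 0) (hμ : ∀ k, μ < a k) :
    HasDerivAt (fun ν => -phi g a ν ^ 3 * resolventMoment g a 3 ν)
      (3 * phi g a μ ^ 3 * (phi g a μ ^ 2 * resolventMoment g a 3 μ ^ 2 - resolventMoment g a 4 μ))
      μ := by
  refine (((hasDerivAt_phi hg hμ).pow 3).neg.mul
    (hasDerivAt_resolventMoment (fun k => (hμ k).ne') 3)).congr_deriv ?_
  simp only [Pi.neg_apply, Pi.pow_apply]
  push_cast
  ring

lemma second_deriv_phi_nonneg (hg : g ≠ 0) (hμ : ∀ k, μ < a k) :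
    0 ≤ 3 * phi g a μ ^ 3 *
      (phi g a μ ^ 2 * resolventMoment g a 3 μ ^ 2 - resolventMoment g a 4 μ) := by
  have hφ3 : phi g a μ ^ 3 < 0 := Odd.pow_neg (by decide) (phi_neg hg hμ)
  have hcs : phi g a μ ^ 2 * resolventMoment g a 3 μ ^ 2 ≤ resolventMoment g a 4 μ := by
    rw [phi_sq, inv_mul_le_iff₀ (resolventMoment_pos hg hμ 2)]
    exact sq_resolventMoment_three_le
  exact mul_nonneg_of_nonpos_of_nonpos (by linarith) (sub_nonpos.mpr hcs)

variable {c : ℝ}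

lemma continuousOn_phi (hg : g ≠ 0) (hc : ∀ k, c ≤ a k) : ContinuousOn (phi g a) (Iio c) :=
  fun _ hμ => (hasDerivAt_phi hg fun k => lt_of_lt_of_le hμ (hc k)).continuousAt.continuousWithinAt

lemma convexOn_phi (hg : g ≠ 0) (hc : ∀ k, c ≤ a k) : ConvexOn ℝ (Iio c) (phi g a) := by
  have hpoles : ∀ μ ∈ interior (Iio c), ∀ k, μ < a k := fun μ hμ k =>
    lt_of_lt_of_le (mem_Iio.mp (interior_subset hμ)) (hc k)
  exact convexOn_of_hasDerivWithinAt2_nonneg (convex_Iio c) (continuousOn_phi hg hc)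
    (f' := fun μ => -phi g a μ ^ 3 * resolventMoment g a 3 μ)
    (f'' := fun μ => 3 * phi g a μ ^ 3 *
      (phi g a μ ^ 2 * resolventMoment g a 3 μ ^ 2 - resolventMoment g a 4 μ))
    (fun μ hμ => (hasDerivAt_phi hg (hpoles μ hμ)).hasDerivWithinAt)
    (fun μ hμ => (hasDerivAt_deriv_phi hg (hpoles μ hμ)).hasDerivWithinAt)
    (fun μ hμ => second_deriv_phi_nonneg hg (hpoles μ hμ))

lemma strictMonoOn_phi (hg : g ≠ 0) (hc : ∀ k, c ≤ a k) : StrictMonoOn (phi g a) (Iio c) := by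
  have hpoles : ∀ μ ∈ interior (Iio c), ∀ k, μ < a k := fun μ hμ k =>
    lt_of_lt_of_le (mem_Iio.mp (interior_subset hμ)) (hc k)
  exact strictMonoOn_of_hasDerivWithinAt_pos (convex_Iio c) (continuousOn_phi hg hc)
    (f' := fun μ => -phi g a μ ^ 3 * resolventMoment g a 3 μ)
    (fun μ hμ => (hasDerivAt_phi hg (hpoles μ hμ)).hasDerivWithinAt)
    (fun μ hμ => deriv_phi_pos hg (hpoles μ hμ))

end TrustRegion

open TrustRegion in
/-- for sorted `λ₁ ≤ ⋯ ≤ λ_n` and `g ≠ 0`, the function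
`φ(μ) = −(∑ₖ gₖ²/(λₖ − μ)²)^{−1/2}` is differentiable on `(−∞, λ₁)` with derivative
`φ′(μ) = −φ(μ)³·∑ₖ gₖ²/(λₖ − μ)³ > 0`, and it is convex and strictly increasing on
`(−∞, min{λ₁, 0})`. -/
theorem trust_region_phi_properties
    (n : ℕ) (hn : 0 < n) (l : Fin n → ℝ) (hl : Monotone l)
    (g : Fin n → ℝ) (hg : g ≠ 0) :
    (∀ μ : ℝ, μ < l ⟨0, hn⟩ →
      HasDerivAt (fun μ : ℝ => -(Real.sqrt (∑ k, g k ^ 2 / (l k - μ) ^ 2))⁻¹)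
        (-(-(Real.sqrt (∑ k, g k ^ 2 / (l k - μ) ^ 2))⁻¹) ^ 3 *
          ∑ k, g k ^ 2 / (l k - μ) ^ 3) μ ∧
      0 < -(-(Real.sqrt (∑ k, g k ^ 2 / (l k - μ) ^ 2))⁻¹) ^ 3 *
          ∑ k, g k ^ 2 / (l k - μ) ^ 3) ∧
    ConvexOn ℝ (Set.Iio (min (l ⟨0, hn⟩) 0))
      (fun μ : ℝ => -(Real.sqrt (∑ k, g k ^ 2 / (l k - μ) ^ 2))⁻¹) ∧
    StrictMonoOn (fun μ : ℝ => -(Real.sqrt (∑ k, g k ^ 2 / (l k - μ) ^ 2))⁻¹)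
      (Set.Iio (min (l ⟨0, hn⟩) 0)) := by
  have hl₁ : ∀ k, l ⟨0, hn⟩ ≤ l k := fun k => hl (Fin.mk_le_of_le_val (Nat.zero_le _))
  have hc : ∀ k, min (l ⟨0, hn⟩) 0 ≤ l k := fun k => (min_le_left _ _).trans (hl₁ k)
  refine ⟨fun μ hμ => ?_, convexOn_phi hg hc, strictMonoOn_phi hg hc⟩
  have hμk : ∀ k, μ < l k := fun k => lt_of_lt_of_le hμ (hl₁ k)
  exact ⟨hasDerivAt_phi hg hμk, deriv_phi_pos hg hμk⟩
end
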